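/- arXiv:2605.04368 — 3 statements merged into one kernel-verified Lean document; each statement's English description precedes it below -/
import Mathlib

section
/- Let P be the transition matrix of an irreducible Markov chain with stationary distribution d > 0 and D = diag(d). If y satisfies ⟨y, Py⟩_D = ‖y‖_D², then y is a constant vector. -/
/-!
Since `P` is row-stochastic and `d` is stationary, the Dirichlet form
`½ ∑ᵢⱼ dᵢ Pᵢⱼ (yᵢ - yⱼ)²` equals `‖y‖_D² - ⟨y, Py⟩_D`, so the hypothesis makes it vanish.
Every term is nonnegative, hence `yᵢ = yⱼ` along each positive entry `Pᵢⱼ`, and therefore along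
every path of the graph of positive entries; irreducibility connects any two states by such a path.
-/

section

variable {n R : Type*} [Fintype n]

theorem dirichlet_form_eq [CommRing R] (P : Matrix n n R) (hP1 : ∀ i, ∑ j, P i j = 1)
    (d : n → R) (hstat : ∀ j, ∑ i, d i * P i j = d j) (y : n → R) :
    ∑ i, ∑ j, d i * P i j * (y i - y j) ^ 2
      = 2 * (∑ i, d i * y i ^ 2 - ∑ i, d i * y i * P.mulVec y i) := by
  have hrow : ∑ i, ∑ j, d i * P i j * y i ^ 2 = ∑ i, d i * y i ^ 2 := by
    simp_rw [← Finset.sum_mul, ← Finset.mul_sum, hP1, mul_one]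
  have hcol : ∑ i, ∑ j, d i * P i j * y j ^ 2 = ∑ i, d i * y i ^ 2 := by
    rw [Finset.sum_comm]
    simp_rw [← Finset.sum_mul, hstat]
  have hcross : ∑ i, ∑ j, d i * P i j * (y i * y j) = ∑ i, d i * y i * P.mulVec y i := by
    simp_rw [Matrix.mulVec, dotProduct, Finset.mul_sum]
    exact Finset.sum_congr rfl fun i _ => Finset.sum_congr rfl fun j _ => by ring
  calc ∑ i, ∑ j, d i * P i j * (y i - y j) ^ 2
      = ∑ i, ∑ j, d i * P i j * y i ^ 2 + ∑ i, ∑ j, d i * P i j * y j ^ 2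
          - 2 * ∑ i, ∑ j, d i * P i j * (y i * y j) := by
        simp only [Finset.mul_sum, ← Finset.sum_add_distrib, ← Finset.sum_sub_distrib]
        exact Finset.sum_congr rfl fun i _ => Finset.sum_congr rfl fun j _ => by ring
    _ = 2 * (∑ i, d i * y i ^ 2 - ∑ i, d i * y i * P.mulVec y i) := by
        rw [hrow, hcol, hcross]; ring

theorem eq_of_dirichlet_form_eq_zero [CommRing R] [LinearOrder R] [IsStrictOrderedRing R]
    {P : Matrix n n R} (hP0 : ∀ i j, 0 ≤ P i j) {d : n → R} (hd0 : ∀ i, 0 < d i) {y : n → R}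
    (h : ∑ i, ∑ j, d i * P i j * (y i - y j) ^ 2 = 0) {i j : n} (hij : 0 < P i j) :
    y i = y j := by
  have hterm_nonneg : ∀ i j, 0 ≤ d i * P i j * (y i - y j) ^ 2 := fun i j =>
    mul_nonneg (mul_nonneg (hd0 i).le (hP0 i j)) (sq_nonneg _)
  have hrow_zero := (Fintype.sum_eq_zero_iff_of_nonneg fun i =>
    Fintype.sum_nonneg (hterm_nonneg i)).mp h
  have hterm_zero := congrFun ((Fintype.sum_eq_zero_iff_of_nonneg (hterm_nonneg i)).mp
    (congrFun hrow_zero i)) j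
  have hsq : (y i - y j) ^ 2 = 0 :=
    (mul_eq_zero.mp hterm_zero).resolve_left (mul_pos (hd0 i) hij).ne'
  exact sub_eq_zero.mp (pow_eq_zero_iff two_ne_zero |>.mp hsq)

theorem Quiver.Path.apply_eq {V α : Type*} [Quiver V] {f : V → α}
    (hf : ∀ a b, (a ⟶ b) → f a = f b) {i j : V} (p : Quiver.Path i j) : f i = f j := by
  induction p with
  | nil => rfl
  | cons _ e ih => exact ih.trans (hf _ _ e)

theorem Matrix.apply_eq_of_pow_apply_pos {α : Type*} [DecidableEq n] [Ring R] [LinearOrder R]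
    [IsOrderedRing R] [PosMulStrictMono R] [Nontrivial R] {P : Matrix n n R}
    (hP0 : ∀ i j, 0 ≤ P i j) {y : n → α} (hy : ∀ i j, 0 < P i j → y i = y j)
    {k : ℕ} {i j : n} (hk : 0 < (P ^ k) i j) : y i = y j := by
  let := P.toQuiver
  obtain ⟨⟨p, -⟩⟩ := (Matrix.pow_apply_pos_iff_nonempty_path hP0 k i j).mp hk
  exact p.apply_eq fun a b (e : PLift (0 < P a b)) => hy a b e.down

end

theorem equality_forces_constant_general {n : Type*} [Fintype n] [DecidableEq n]
    (P : Matrix n n ℝ) (hP0 : ∀ i j, 0 ≤ P i j) (hP1 : ∀ i, ∑ j, P i j = 1)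
    (hirr : ∀ i j, ∃ k : ℕ, 0 < (P ^ k) i j)
    (d : n → ℝ) (hd0 : ∀ i, 0 < d i)
    (hstat : ∀ j, ∑ i, d i * P i j = d j)
    (y : n → ℝ)
    (heq : ∑ i, d i * y i * (P.mulVec y i) = ∑ i, d i * y i ^ 2) :
    ∃ c : ℝ, ∀ i, y i = c := by
  have hform : ∑ i, ∑ j, d i * P i j * (y i - y j) ^ 2 = 0 := by
    rw [dirichlet_form_eq P hP1 d hstat y, heq, sub_self, mul_zero]
  have hedge : ∀ i j, 0 < P i j → y i = y j := fun _ _ =>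
    eq_of_dirichlet_form_eq_zero hP0 hd0 hform
  rcases isEmpty_or_nonempty n with _ | ⟨⟨i₀⟩⟩
  · exact ⟨0, isEmptyElim⟩
  · refine ⟨y i₀, fun i => ?_⟩
    obtain ⟨k, hk⟩ := hirr i i₀
    exact Matrix.apply_eq_of_pow_apply_pos hP0 hedge hk

/-- For an irreducible row-stochastic matrix `P` with positive stationary
distribution `d`, equality `⟨y, Py⟩_D = ‖y‖_D²` forces `y` to be constant. -/
theorem equality_forces_constant {n : Type*} [Fintype n] [DecidableEq n]
    (P : Matrix n n ℝ) (hP0 : ∀ i j, 0 ≤ P i j) (hP1 : ∀ i, ∑ j, P i j = 1)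
    (hirr : ∀ i j, ∃ k : ℕ, 0 < (P ^ k) i j)
    (d : n → ℝ) (hd0 : ∀ i, 0 < d i) (hd1 : ∑ i, d i = 1)
    (hstat : ∀ j, ∑ i, d i * P i j = d j)
    (y : n → ℝ)
    (heq : ∑ i, d i * y i * (P.mulVec y i) = ∑ i, d i * y i ^ 2) :
    ∃ c : ℝ, ∀ i, y i = c :=
  equality_forces_constant_general P hP0 hP1 hirr d hd0 hstat y heq
end

section
/- Let P be row-stochastic with stationary distribution d > 0, D = diag(d), γ ∈ [0,1), and let Φ̃ be an n×m matrix of full column rank. Then the matrix à = Φ̃^T D (γP - I) Φ̃ is negative definite: x^T à x < 0 for all x ≠ 0. -/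
/-- For row-stochastic `P` with positive stationary distribution `d`, `γ ∈ [0,1)`,
and full-column-rank features `Φ̃`, the matrix `Ã = Φ̃ᵀ D (γP - I) Φ̃` is
negative definite: `xᵀ Ã x < 0` for all `x ≠ 0`. -/
theorem key_matrix_negative_definite {n m : Type*} [Fintype n] [Fintype m]
    [DecidableEq n]
    (P : Matrix n n ℝ) (hP0 : ∀ i j, 0 ≤ P i j) (hP1 : ∀ i, ∑ j, P i j = 1)
    (d : n → ℝ) (hd0 : ∀ i, 0 < d i) (hd1 : ∑ i, d i = 1)
    (hstat : ∀ j, ∑ i, d i * P i j = d j)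
    (γ : ℝ) (hγ : γ ∈ Set.Ico (0 : ℝ) 1)
    (Φ : Matrix n m ℝ) (hrank : ∀ x : m → ℝ, Φ.mulVec x = 0 → x = 0)
    (A : Matrix m m ℝ)
    (hA : A = Φ.transpose * Matrix.diagonal d * (γ • P - 1) * Φ) :
    ∀ x : m → ℝ, x ≠ 0 → dotProduct x (A.mulVec x) < 0 := by
  intro x hx
  set y : n → ℝ := Φ.mulVec x with hy
  have hy0 : y ≠ 0 := fun h => hx (hrank x h)
  set T : ℝ := ∑ i, ∑ j, d i * P i j * (y i * y j) with hT
  set S : ℝ := ∑ i, d i * y i ^ 2 with hS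
  have hquad : dotProduct x (A.mulVec x) = γ * T - S := by
    subst hA
    rw [← Matrix.mulVec_mulVec, ← Matrix.mulVec_mulVec, ← Matrix.mulVec_mulVec,
      ← hy, Matrix.dotProduct_mulVec, Matrix.vecMul_transpose, ← hy]
    simp only [Matrix.sub_mulVec, Matrix.smul_mulVec, Matrix.one_mulVec,
      Matrix.mulVec_diagonal, dotProduct, Matrix.mulVec, Pi.sub_apply,
      Pi.smul_apply, smul_eq_mul, hT, hS]
    rw [Finset.mul_sum, ← Finset.sum_sub_distrib]
    refine Finset.sum_congr rfl fun i _ => ?_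
    simp only [Matrix.diagonal_apply, ite_mul, zero_mul, mul_ite, mul_zero,
      Finset.sum_ite_eq, Finset.mem_univ, if_true, Matrix.sub_apply,
      Matrix.smul_apply, Matrix.one_apply, smul_eq_mul, sub_mul,
      Finset.sum_sub_distrib, mul_sub, Finset.mul_sum]
    simp [Finset.sum_ite_eq', mul_comm, mul_assoc, mul_left_comm]
    ring_nf
    tauto
  rw [hquad]
  obtain ⟨hγ0, hγ1⟩ := hγ
  have hSpos : 0 < S := by
    obtain ⟨i0, hi0⟩ : ∃ i, y i ≠ 0 := by
      by_contra h; push_neg at h; exact hy0 (funext h)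
    refine Finset.sum_pos' (fun i _ => mul_nonneg (hd0 i).le (sq_nonneg _)) ?_
    exact ⟨i0, Finset.mem_univ _, mul_pos (hd0 i0) (by positivity)⟩
  have hTS : T ≤ S := by
    have step : T ≤ ∑ i, ∑ j, d i * P i j * ((y i ^ 2 + y j ^ 2) / 2) := by
      refine Finset.sum_le_sum fun i _ => Finset.sum_le_sum fun j _ => ?_
      refine mul_le_mul_of_nonneg_left ?_ (mul_nonneg (hd0 i).le (hP0 i j))
      nlinarith [sq_nonneg (y i - y j)]
    have key : ∑ i, ∑ j, d i * P i j * ((y i ^ 2 + y j ^ 2) / 2)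
        = ∑ i, ∑ j, d i * P i j * (y i ^ 2 / 2)
          + ∑ i, ∑ j, d i * P i j * (y j ^ 2 / 2) := by
      rw [← Finset.sum_add_distrib]
      refine Finset.sum_congr rfl fun i _ => ?_
      rw [← Finset.sum_add_distrib]
      exact Finset.sum_congr rfl fun j _ => by ring
    have h1 : ∑ i, ∑ j, d i * P i j * (y i ^ 2 / 2) = S / 2 := by
      rw [hS, Finset.sum_div]
      refine Finset.sum_congr rfl fun i _ => ?_
      have : ∑ j, d i * P i j * (y i ^ 2 / 2)
          = (d i * (y i ^ 2 / 2)) * ∑ j, P i j := by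
        rw [Finset.mul_sum]; exact Finset.sum_congr rfl fun j _ => by ring
      rw [this, hP1 i]; ring
    have h2 : ∑ i, ∑ j, d i * P i j * (y j ^ 2 / 2) = S / 2 := by
      rw [Finset.sum_comm, hS, Finset.sum_div]
      refine Finset.sum_congr rfl fun j _ => ?_
      have : ∑ i, d i * P i j * (y j ^ 2 / 2)
          = (∑ i, d i * P i j) * (y j ^ 2 / 2) := by
        rw [Finset.sum_mul]
      rw [this, hstat j]; ring
    calc T ≤ _ := step
    _ = S := by rw [key, h1, h2]; ring
  nlinarith [mul_le_mul_of_nonneg_left hTS hγ0]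
end

section
/- Let P be the transition matrix of an irreducible finite Markov chain with stationary distribution d > 0, D = diag(d), and Φ̃ ∈ ℝ^{n×m} of full column rank such that the row of Φ̃ corresponding to some fixed state s_T is zero. Then à = Φ̃^T D (P - I) Φ̃ satisfies x^T à x < 0 for all x ≠ 0 (strict negative definiteness even at γ = 1). -/
/-- Entries of powers of an entrywise-nonnegative matrix are nonnegative. -/
lemma pow_entry_nonneg {n : Type*} [Fintype n] [DecidableEq n]
    (P : Matrix n n ℝ) (hP0 : ∀ i j, 0 ≤ P i j) :
    ∀ (k : ℕ) (i j : n), 0 ≤ (P ^ k) i j := by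
  intro k
  induction k with
  | zero =>
    intro i j
    simp [Matrix.one_apply]
    split <;> norm_num
  | succ k ih =>
    intro i j
    rw [pow_succ, Matrix.mul_apply]
    exact Finset.sum_nonneg fun l _ => mul_nonneg (ih i l) (hP0 l j)

/-- If `y` is constant along positive transitions, it is constant along paths. -/
lemma const_along_powers {n : Type*} [Fintype n] [DecidableEq n]
    (P : Matrix n n ℝ) (hP0 : ∀ i j, 0 ≤ P i j) (y : n → ℝ)
    (hc : ∀ i j, 0 < P i j → y i = y j) :
    ∀ (k : ℕ) (i j : n), 0 < (P ^ k) i j → y i = y j := by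
  intro k
  induction k with
  | zero =>
    intro i j h
    by_cases hij : i = j
    · rw [hij]
    · simp [Matrix.one_apply, hij] at h
  | succ k ih =>
    intro i j h
    rw [pow_succ, Matrix.mul_apply] at h
    have : ∃ l ∈ Finset.univ, 0 < (P ^ k) i l * P l j := by
      by_contra hcon
      push_neg at hcon
      have : ∑ l, (P ^ k) i l * P l j ≤ 0 :=
        Finset.sum_nonpos fun l hl => hcon l hl
      linarith
    obtain ⟨l, _, hl⟩ := this
    have h1 : 0 < (P ^ k) i l := by
      rcases lt_or_ge 0 ((P ^ k) i l) with h' | h'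
      · exact h'
      · exfalso
        have := mul_nonpos_of_nonpos_of_nonneg h' (hP0 l j)
        linarith
    have h2 : 0 < P l j := by
      rcases lt_or_ge 0 (P l j) with h' | h'
      · exact h'
      · exfalso
        have := mul_nonpos_of_nonneg_of_nonpos (pow_entry_nonneg P hP0 k i l) h'
        linarith
    exact (ih i l h1).trans (hc l j h2)

/-- Undiscounted case: for irreducible row-stochastic `P` with positive stationary
distribution `d` and full-column-rank features `Φ̃` whose row at the terminal
state `sT` is zero, `Ã = Φ̃ᵀ D (P - I) Φ̃` satisfies `xᵀ Ã x < 0` for `x ≠ 0`. -/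
theorem key_matrix_negative_definite_undiscounted {n m : Type*} [Fintype n]
    [Fintype m] [DecidableEq n]
    (P : Matrix n n ℝ) (hP0 : ∀ i j, 0 ≤ P i j) (hP1 : ∀ i, ∑ j, P i j = 1)
    (hirr : ∀ i j, ∃ k : ℕ, 0 < (P ^ k) i j)
    (d : n → ℝ) (hd0 : ∀ i, 0 < d i) (hd1 : ∑ i, d i = 1)
    (hstat : ∀ j, ∑ i, d i * P i j = d j)
    (sT : n)
    (Φ : Matrix n m ℝ) (hrank : ∀ x : m → ℝ, Φ.mulVec x = 0 → x = 0)
    (hterm : ∀ j, Φ sT j = 0)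
    (A : Matrix m m ℝ)
    (hA : A = Φ.transpose * Matrix.diagonal d * (P - 1) * Φ) :
    ∀ x : m → ℝ, x ≠ 0 → dotProduct x (A.mulVec x) < 0 := by
  intro x hx
  set y : n → ℝ := Φ.mulVec x with hy
  -- the quadratic form equals ∑ i, d i * y i * ((P *ᵥ y) i - y i)
  have hform : dotProduct x (A.mulVec x)
      = ∑ i, y i * (d i * ((P.mulVec y) i - y i)) := by
    rw [hA]
    have hassoc : Φ.transpose * Matrix.diagonal d * (P - 1) * Φ
        = Φ.transpose * (Matrix.diagonal d * ((P - 1) * Φ)) := by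
      simp only [Matrix.mul_assoc]
    rw [hassoc, ← Matrix.mulVec_mulVec, ← Matrix.mulVec_mulVec, ← Matrix.mulVec_mulVec,
      Matrix.dotProduct_mulVec, Matrix.vecMul_transpose]
    rw [Matrix.sub_mulVec, Matrix.one_mulVec]
    simp [dotProduct, Matrix.mulVec_diagonal, hy]
  -- key nonnegative quantity
  set f : n → n → ℝ := fun i j =>
    d i * P i j * (((y i) ^ 2 + (y j) ^ 2) / 2 - y i * y j) with hf
  have hfnn : ∀ i j, 0 ≤ f i j := by
    intro i j
    apply mul_nonneg (mul_nonneg (hd0 i).le (hP0 i j))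
    nlinarith [sq_nonneg (y i - y j)]
  have hsum : ∑ i, ∑ j, f i j
      = -(∑ i, y i * (d i * ((P.mulVec y) i - y i))) := by
    have e1 : ∑ i, ∑ j, d i * P i j * (y i) ^ 2 / 2
        = ∑ i, d i * (y i) ^ 2 / 2 := by
      refine Finset.sum_congr rfl fun i _ => ?_
      calc ∑ j, d i * P i j * (y i) ^ 2 / 2
          = (d i * (y i) ^ 2 / 2) * ∑ j, P i j := by
            rw [Finset.mul_sum]; exact Finset.sum_congr rfl fun j _ => by ring
        _ = d i * (y i) ^ 2 / 2 := by rw [hP1 i, mul_one]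
    have e2 : ∑ i, ∑ j, d i * P i j * (y j) ^ 2 / 2
        = ∑ j, d j * (y j) ^ 2 / 2 := by
      rw [Finset.sum_comm]
      refine Finset.sum_congr rfl fun j _ => ?_
      calc ∑ i, d i * P i j * (y j) ^ 2 / 2
          = ((y j) ^ 2 / 2) * ∑ i, d i * P i j := by
            rw [Finset.mul_sum]; exact Finset.sum_congr rfl fun i _ => by ring
        _ = d j * (y j) ^ 2 / 2 := by rw [hstat j]; ring
    have e3 : ∑ i, ∑ j, d i * P i j * (y i * y j)
        = ∑ i, d i * y i * (P.mulVec y) i := by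
      refine Finset.sum_congr rfl fun i _ => ?_
      rw [Matrix.mulVec, dotProduct, Finset.mul_sum]
      exact Finset.sum_congr rfl fun j _ => by ring
    have expand : ∀ i, ∑ j, f i j
        = (∑ j, d i * P i j * (y i) ^ 2 / 2) + (∑ j, d i * P i j * (y j) ^ 2 / 2)
          - ∑ j, d i * P i j * (y i * y j) := by
      intro i
      rw [← Finset.sum_add_distrib, ← Finset.sum_sub_distrib]
      exact Finset.sum_congr rfl fun j _ => by simp only [hf]; ring
    calc ∑ i, ∑ j, f i j
        = (∑ i, ∑ j, d i * P i j * (y i) ^ 2 / 2)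
          + (∑ i, ∑ j, d i * P i j * (y j) ^ 2 / 2)
          - ∑ i, ∑ j, d i * P i j * (y i * y j) := by
          simp_rw [expand]
          rw [← Finset.sum_add_distrib, ← Finset.sum_sub_distrib]
      _ = (∑ i, d i * (y i) ^ 2 / 2) + (∑ j, d j * (y j) ^ 2 / 2)
          - ∑ i, d i * y i * (P.mulVec y) i := by rw [e1, e2, e3]
      _ = -(∑ i, y i * (d i * ((P.mulVec y) i - y i))) := by
          rw [← Finset.sum_add_distrib, ← Finset.sum_sub_distrib]
          rw [show -(∑ i, y i * (d i * ((P.mulVec y) i - y i)))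
            = ∑ i, -(y i * (d i * ((P.mulVec y) i - y i))) by rw [Finset.sum_neg_distrib]]
          exact Finset.sum_congr rfl fun i _ => by ring
  have hle : dotProduct x (A.mulVec x) ≤ 0 := by
    rw [hform]
    have : 0 ≤ ∑ i, ∑ j, f i j :=
      Finset.sum_nonneg fun i _ => Finset.sum_nonneg fun j _ => hfnn i j
    linarith [hsum ▸ this]
  have hne : dotProduct x (A.mulVec x) ≠ 0 := by
    intro h0
    have hsum0 : ∑ i, ∑ j, f i j = 0 := by
      rw [hsum, ← hform, h0, neg_zero]
    have hfz : ∀ i j, f i j = 0 := by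
      intro i j
      have houter : ∀ i ∈ Finset.univ, (∑ j, f i j) = 0 := by
        rw [← Finset.sum_eq_zero_iff_of_nonneg
          (fun i _ => Finset.sum_nonneg fun j _ => hfnn i j)]
        exact hsum0
      have hin := houter i (Finset.mem_univ i)
      have := (Finset.sum_eq_zero_iff_of_nonneg (fun j _ => hfnn i j)).mp hin
      exact this j (Finset.mem_univ j)
    have hc : ∀ i j, 0 < P i j → y i = y j := by
      intro i j hPij
      have h := hfz i j
      have hpos : 0 < d i * P i j := mul_pos (hd0 i) hPij
      have : ((y i) ^ 2 + (y j) ^ 2) / 2 - y i * y j = 0 := by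
        simp only [hf] at h
        rcases mul_eq_zero.mp h with h' | h'
        · exact absurd h' (ne_of_gt hpos)
        · exact h'
      nlinarith [sq_nonneg (y i - y j)]
    have hyconst : ∀ i, y i = y sT := by
      intro i
      obtain ⟨k, hk⟩ := hirr i sT
      exact const_along_powers P hP0 y hc k i sT hk
    have hysT : y sT = 0 := by
      show Matrix.mulVec Φ x sT = 0
      simp [Matrix.mulVec, dotProduct, hterm]
    have hy0 : y = 0 := funext fun i => by rw [hyconst i, hysT]; rfl
    exact hx (hrank x hy0)
  exact lt_of_le_of_ne hle hne
end
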